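/- arXiv:2103.11655 — 6 statements merged into one kernel-verified Lean document; each statement's English description precedes it below -/
import Mathlib

section
/- Let α ∈ (0,1) be irrational and let G be the bipartite graph with both vertex classes equal to [0,1], where y in the first class is adjacent to z in the second class iff the point (y, z+α) lies on the graph of one of the four isometries x ↦ x, x ↦ x+2α, x ↦ 2−x, x ↦ 2α−x restricted appropriately; equivalently, y ~ z iff z+α ∈ {y, y+2α, 2−y, 2α−y} ∩ [α, 1+α]. Then every vertex of G has degree at most 2, and the vertices of degree 1 are exactly the four points corresponding to the corners of the closed polygonal curve with vertices (0,2α), (1−α,1+α), (1,1), (α,α). -/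
/-- In the bipartite graph between I = [0,1] and J = [α,1+α] given by the
four isometries, every vertex has degree at most 2 and the degree-one vertices are
exactly the four corners (0,2α), (1−α,1+α), (1,1), (α,α) of the polygonal curve:
on the I side y = 0 and y = 1, on the J side w = α and w = 1+α, with the
corresponding unique neighbours. -/
theorem stmt2 (α : ℝ) (hirr : Irrational α) (h0 : 0 < α) (h1 : α < 1)
    (NI NJ : ℝ → Set ℝ)
    (hNI : ∀ y, NI y = {w | w ∈ Set.Icc α (1+α) ∧
      w ∈ ({y, y + 2*α, 2 - y, 2*α - y} : Set ℝ)})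
    (hNJ : ∀ w, NJ w = {y | y ∈ Set.Icc (0:ℝ) 1 ∧
      w ∈ ({y, y + 2*α, 2 - y, 2*α - y} : Set ℝ)}) :
    (∀ y ∈ Set.Icc (0:ℝ) 1, (NI y).encard ≤ 2 ∧ ((NI y).encard = 1 ↔ y = 0 ∨ y = 1)) ∧
    (∀ w ∈ Set.Icc α (1+α), (NJ w).encard ≤ 2 ∧ ((NJ w).encard = 1 ↔ w = α ∨ w = 1+α)) ∧
    NI 0 = {2*α} ∧ NI 1 = {1} ∧ NJ α = {α} ∧ NJ (1+α) = {1-α} := by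
  have hle : ∀ (S : Set ℝ) (a b : ℝ), S ⊆ {a, b} → S.encard ≤ 2 := by
    intro S a b h
    refine le_trans (Set.encard_mono h) ?_
    refine le_trans (Set.encard_insert_le _ _) ?_
    rw [Set.encard_singleton]
    norm_num
  have hnt : ∀ (S : Set ℝ) (a b : ℝ), a ∈ S → b ∈ S → a ≠ b → S.encard ≠ 1 := by
    intro S a b ha hb hab h
    have : 1 < S.encard := Set.one_lt_encard_iff.mpr ⟨a, b, ha, hb, hab⟩
    rw [h] at this
    exact lt_irrefl _ this
  have hNI0 : NI 0 = {2*α} := by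
    ext w
    simp only [hNI, Set.mem_Icc, Set.mem_setOf_eq, Set.mem_insert_iff, Set.mem_singleton_iff]
    constructor
    · rintro ⟨⟨hl, hr⟩, h | h | h | h⟩ <;> linarith
    · rintro rfl
      exact ⟨⟨by linarith, by linarith⟩, by right; right; right; ring⟩
  have hNI1 : NI 1 = {1} := by
    ext w
    simp only [hNI, Set.mem_Icc, Set.mem_setOf_eq, Set.mem_insert_iff, Set.mem_singleton_iff]
    constructor
    · rintro ⟨⟨hl, hr⟩, h | h | h | h⟩ <;> linarith
    · rintro rfl
      exact ⟨⟨by linarith, by linarith⟩, by left; rfl⟩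
  have hNJa : NJ α = {α} := by
    ext y
    simp only [hNJ, Set.mem_Icc, Set.mem_setOf_eq, Set.mem_insert_iff, Set.mem_singleton_iff]
    constructor
    · rintro ⟨⟨hl, hr⟩, h | h | h | h⟩ <;> linarith
    · rintro rfl
      exact ⟨⟨by linarith, by linarith⟩, by left; rfl⟩
  have hNJb : NJ (1+α) = {1-α} := by
    ext y
    simp only [hNJ, Set.mem_Icc, Set.mem_setOf_eq, Set.mem_insert_iff, Set.mem_singleton_iff]
    constructor
    · rintro ⟨⟨hl, hr⟩, h | h | h | h⟩ <;> linarith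
    · rintro rfl
      exact ⟨⟨by linarith, by linarith⟩, by right; left; ring⟩
  refine ⟨?_, ?_, hNI0, hNI1, hNJa, hNJb⟩
  · rintro y ⟨hy0, hy1⟩
    constructor
    · refine hle _ (if α ≤ y then y else 2*α - y) (if y ≤ 1-α then y + 2*α else 2 - y) ?_
      intro w hw
      rw [hNI] at hw
      simp only [Set.mem_Icc, Set.mem_setOf_eq, Set.mem_insert_iff, Set.mem_singleton_iff] at hw ⊢
      obtain ⟨⟨hl, hr⟩, h | h | h | h⟩ := hw
      · left; split_ifs with hc <;> linarith
      · right; split_ifs with hc <;> linarith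
      · right; split_ifs with hc <;> linarith
      · left; split_ifs with hc <;> linarith
    · constructor
      · intro hcard
        by_contra hcon
        push_neg at hcon
        obtain ⟨hc0, hc1⟩ := hcon
        rcases le_or_gt α y with ha | ha <;> rcases le_or_gt y (1-α) with hb | hb
        · exact hnt _ y (y + 2*α)
            (by rw [hNI]; exact ⟨Set.mem_Icc.mpr ⟨by linarith, by linarith⟩, by simp⟩)
            (by rw [hNI]; exact ⟨Set.mem_Icc.mpr ⟨by linarith, by linarith⟩, by simp⟩)
            (by intro h; linarith) hcard
        · exact hnt _ y (2 - y)
            (by rw [hNI]; exact ⟨Set.mem_Icc.mpr ⟨by linarith, by linarith⟩, by simp⟩)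
            (by rw [hNI]; exact ⟨Set.mem_Icc.mpr ⟨by linarith, by linarith⟩, by simp⟩)
            (by intro h; have : y = 1 := by linarith
                exact hc1 this) hcard
        · exact hnt _ (2*α - y) (y + 2*α)
            (by rw [hNI]; exact ⟨Set.mem_Icc.mpr ⟨by linarith, by linarith⟩, by simp⟩)
            (by rw [hNI]; exact ⟨Set.mem_Icc.mpr ⟨by linarith, by linarith⟩, by simp⟩)
            (by intro h; have : y = 0 := by linarith
                exact hc0 this) hcard
        · exact hnt _ (2*α - y) (2 - y)
            (by rw [hNI]; exact ⟨Set.mem_Icc.mpr ⟨by linarith, by linarith⟩, by simp⟩)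
            (by rw [hNI]; exact ⟨Set.mem_Icc.mpr ⟨by linarith, by linarith⟩, by simp⟩)
            (by intro h; linarith) hcard
      · rintro (rfl | rfl)
        · rw [hNI0]; exact Set.encard_singleton _
        · rw [hNI1]; exact Set.encard_singleton _
  · rintro w ⟨hl, hr⟩
    constructor
    · refine hle _ (if w ≤ 1 then w else 2 - w) (if 2*α ≤ w then w - 2*α else 2*α - w) ?_
      intro y hy
      rw [hNJ] at hy
      simp only [Set.mem_Icc, Set.mem_setOf_eq, Set.mem_insert_iff, Set.mem_singleton_iff] at hy ⊢
      obtain ⟨⟨hy0, hy1⟩, h | h | h | h⟩ := hy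
      · left; split_ifs with hc <;> linarith
      · right; split_ifs with hc <;> linarith
      · left; split_ifs with hc <;> linarith
      · right; split_ifs with hc <;> linarith
    · constructor
      · intro hcard
        by_contra hcon
        push_neg at hcon
        obtain ⟨hc0, hc1⟩ := hcon
        rcases le_or_gt w 1 with ha | ha <;> rcases le_or_gt (2*α) w with hb | hb
        · exact hnt _ w (w - 2*α)
            (by rw [hNJ]
                refine ⟨Set.mem_Icc.mpr ⟨by linarith, by linarith⟩, ?_⟩
                simp)
            (by rw [hNJ]
                refine ⟨Set.mem_Icc.mpr ⟨by linarith, by linarith⟩, ?_⟩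
                simp only [Set.mem_insert_iff, Set.mem_singleton_iff]; right; left; ring)
            (by intro h; linarith) hcard
        · exact hnt _ w (2*α - w)
            (by rw [hNJ]
                refine ⟨Set.mem_Icc.mpr ⟨by linarith, by linarith⟩, ?_⟩
                simp)
            (by rw [hNJ]
                refine ⟨Set.mem_Icc.mpr ⟨by linarith, by linarith⟩, ?_⟩
                simp only [Set.mem_insert_iff, Set.mem_singleton_iff]; right; right; right; ring)
            (by intro h; have : w = α := by linarith
                exact hc0 this) hcard
        · exact hnt _ (2 - w) (w - 2*α)
            (by rw [hNJ]
                refine ⟨Set.mem_Icc.mpr ⟨by linarith, by linarith⟩, ?_⟩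
                simp only [Set.mem_insert_iff, Set.mem_singleton_iff]; right; right; left; ring)
            (by rw [hNJ]
                refine ⟨Set.mem_Icc.mpr ⟨by linarith, by linarith⟩, ?_⟩
                simp only [Set.mem_insert_iff, Set.mem_singleton_iff]; right; left; ring)
            (by intro h; have : w = 1 + α := by linarith
                exact hc1 this) hcard
        · exact hnt _ (2 - w) (2*α - w)
            (by rw [hNJ]
                refine ⟨Set.mem_Icc.mpr ⟨by linarith, by linarith⟩, ?_⟩
                simp only [Set.mem_insert_iff, Set.mem_singleton_iff]; right; right; left; ring)
            (by rw [hNJ]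
                refine ⟨Set.mem_Icc.mpr ⟨by linarith, by linarith⟩, ?_⟩
                simp only [Set.mem_insert_iff, Set.mem_singleton_iff]; right; right; right; ring)
            (by intro h; linarith) hcard
      · rintro (rfl | rfl)
        · rw [hNJa]; exact Set.encard_singleton _
        · rw [hNJb]; exact Set.encard_singleton _
end

section
/- Let α ∈ (0,1) be irrational and let G be the bipartite graph between I = [0,1] and J = [α,1+α] whose edges are pairs (y,z) with z ∈ {y, y+2α, 2−y, 2α−y} ∩ [α,1+α]. For every γ ∈ ⟨Γ⟩, written as γ(x) = a·x + 2α·b + 2c with a = ±1 and b, c ∈ ℤ, and every y ∈ [0,1] with γ(y) ∈ [0,1], the graph distance in G between the vertices of I corresponding to y and γ(y) is at most 2|b|. -/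
section Aux

variable {G : SimpleGraph (ℝ ⊕ ℝ)} {α : ℝ}

lemma adj_aux
    (hG : ∀ u v, G.Adj u v ↔ ∃ y w, y ∈ Set.Icc (0:ℝ) 1 ∧ w ∈ Set.Icc α (1+α) ∧
      w ∈ ({y, y + 2*α, 2 - y, 2*α - y} : Set ℝ) ∧
      ((u = Sum.inl y ∧ v = Sum.inr w) ∨ (u = Sum.inr w ∧ v = Sum.inl y)))
    (y w : ℝ) (hy : y ∈ Set.Icc (0:ℝ) 1) (hw : w ∈ Set.Icc α (1+α))
    (hm : w = y ∨ w = y + 2*α ∨ w = 2 - y ∨ w = 2*α - y) :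
    G.Adj (Sum.inl y) (Sum.inr w) := by
  rw [hG]
  refine ⟨y, w, hy, hw, ?_, Or.inl ⟨rfl, rfl⟩⟩
  simpa [Set.mem_insert_iff] using hm

lemma combine_aux {y w y' z : ℝ} (h1 : G.Adj (Sum.inl y) (Sum.inr w))
    (h2 : G.Adj (Sum.inr w) (Sum.inl y'))
    (h3 : G.Reachable (Sum.inl y') (Sum.inl z)) (n : ℕ)
    (h4 : G.dist (Sum.inl y') (Sum.inl z) ≤ n) :
    G.Reachable (Sum.inl y) (Sum.inl z) ∧
      G.dist (Sum.inl y) (Sum.inl z) ≤ n + 2 := by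
  obtain ⟨p, hp⟩ := h3.exists_walk_length_eq_dist
  refine ⟨⟨SimpleGraph.Walk.cons h1 (SimpleGraph.Walk.cons h2 p)⟩, ?_⟩
  have := SimpleGraph.dist_le (SimpleGraph.Walk.cons h1 (SimpleGraph.Walk.cons h2 p))
  simp only [SimpleGraph.Walk.length_cons] at this
  omega

/-- two-step move increasing the α-coordinate -/
lemma step_plus
    (hG : ∀ u v, G.Adj u v ↔ ∃ y w, y ∈ Set.Icc (0:ℝ) 1 ∧ w ∈ Set.Icc α (1+α) ∧
      w ∈ ({y, y + 2*α, 2 - y, 2*α - y} : Set ℝ) ∧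
      ((u = Sum.inl y ∧ v = Sum.inr w) ∨ (u = Sum.inr w ∧ v = Sum.inl y)))
    (h0 : 0 < α) (h1 : α < 1) (y : ℝ) (hy : y ∈ Set.Icc (0:ℝ) 1) :
    ∃ y' w, G.Adj (Sum.inl y) (Sum.inr w) ∧ G.Adj (Sum.inr w) (Sum.inl y') ∧
      y' ∈ Set.Icc (0:ℝ) 1 ∧
      (y' = y + 2*α ∨ y' = 2 - 2*α - y ∨ y' = y + 2*α - 2) := by
  obtain ⟨hy0, hy1⟩ := hy
  rcases le_or_gt y (1 - 2*α) with hc1 | hc1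
  · -- w = y + 2α, y' = y + 2α
    refine ⟨y + 2*α, y + 2*α, adj_aux hG y _ ⟨hy0, hy1⟩ ⟨by linarith, by linarith⟩
      (Or.inr (Or.inl rfl)), (adj_aux hG (y + 2*α) _ ⟨by linarith, by linarith⟩
      ⟨by linarith, by linarith⟩ (Or.inl rfl)).symm, ⟨by linarith, by linarith⟩,
      Or.inl rfl⟩
  rcases le_or_gt y (1 - α) with hc2 | hc2
  · -- w = y + 2α, y' = 2 - w = 2 - 2α - y
    refine ⟨2 - 2*α - y, y + 2*α, adj_aux hG y _ ⟨hy0, hy1⟩ ⟨by linarith, by linarith⟩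
      (Or.inr (Or.inl rfl)), (adj_aux hG (2 - 2*α - y) _ ⟨by linarith, by linarith⟩
      ⟨by linarith, by linarith⟩ (Or.inr (Or.inr (Or.inl (by ring))))).symm,
      ⟨by linarith, by linarith⟩, Or.inr (Or.inl rfl)⟩
  rcases le_or_gt y (2 - 2*α) with hc3 | hc3
  · -- w = 2 - y, y' = w - 2α = 2 - 2α - y
    refine ⟨2 - 2*α - y, 2 - y, adj_aux hG y _ ⟨hy0, hy1⟩ ⟨by linarith, by linarith⟩
      (Or.inr (Or.inr (Or.inl rfl))), (adj_aux hG (2 - 2*α - y) _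
      ⟨by linarith, by linarith⟩ ⟨by linarith, by linarith⟩
      (Or.inr (Or.inl (by ring)))).symm, ⟨by linarith, by linarith⟩,
      Or.inr (Or.inl rfl)⟩
  · -- w = 2 - y, y' = 2α - w = y + 2α - 2
    refine ⟨y + 2*α - 2, 2 - y, adj_aux hG y _ ⟨hy0, hy1⟩ ⟨by linarith, by linarith⟩
      (Or.inr (Or.inr (Or.inl rfl))), (adj_aux hG (y + 2*α - 2) _
      ⟨by linarith, by linarith⟩ ⟨by linarith, by linarith⟩
      (Or.inr (Or.inr (Or.inr (by ring))))).symm, ⟨by linarith, by linarith⟩,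
      Or.inr (Or.inr rfl)⟩

/-- two-step move decreasing the α-coordinate -/
lemma step_minus
    (hG : ∀ u v, G.Adj u v ↔ ∃ y w, y ∈ Set.Icc (0:ℝ) 1 ∧ w ∈ Set.Icc α (1+α) ∧
      w ∈ ({y, y + 2*α, 2 - y, 2*α - y} : Set ℝ) ∧
      ((u = Sum.inl y ∧ v = Sum.inr w) ∨ (u = Sum.inr w ∧ v = Sum.inl y)))
    (h0 : 0 < α) (h1 : α < 1) (y : ℝ) (hy : y ∈ Set.Icc (0:ℝ) 1) :
    ∃ y' w, G.Adj (Sum.inl y) (Sum.inr w) ∧ G.Adj (Sum.inr w) (Sum.inl y') ∧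
      y' ∈ Set.Icc (0:ℝ) 1 ∧
      (y' = y - 2*α ∨ y' = 2*α - y ∨ y' = 2 - 2*α + y) := by
  obtain ⟨hy0, hy1⟩ := hy
  rcases le_or_gt (2*α) y with hc1 | hc1
  · -- w = y, y' = w - 2α
    refine ⟨y - 2*α, y, adj_aux hG y _ ⟨hy0, hy1⟩ ⟨by linarith, by linarith⟩
      (Or.inl rfl), (adj_aux hG (y - 2*α) _ ⟨by linarith, by linarith⟩
      ⟨by linarith, by linarith⟩ (Or.inr (Or.inl (by ring)))).symm,
      ⟨by linarith, by linarith⟩, Or.inl rfl⟩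
  rcases le_or_gt α y with hc2 | hc2
  · -- w = y, y' = 2α - w
    refine ⟨2*α - y, y, adj_aux hG y _ ⟨hy0, hy1⟩ ⟨by linarith, by linarith⟩
      (Or.inl rfl), (adj_aux hG (2*α - y) _ ⟨by linarith, by linarith⟩
      ⟨by linarith, by linarith⟩ (Or.inr (Or.inr (Or.inr (by ring))))).symm,
      ⟨by linarith, by linarith⟩, Or.inr (Or.inl rfl)⟩
  rcases le_or_gt (2*α - 1) y with hc3 | hc3
  · -- w = 2α - y, y' = w = 2α - y
    refine ⟨2*α - y, 2*α - y, adj_aux hG y _ ⟨hy0, hy1⟩ ⟨by linarith, by linarith⟩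
      (Or.inr (Or.inr (Or.inr rfl))), (adj_aux hG (2*α - y) _
      ⟨by linarith, by linarith⟩ ⟨by linarith, by linarith⟩ (Or.inl rfl)).symm,
      ⟨by linarith, by linarith⟩, Or.inr (Or.inl rfl)⟩
  · -- w = 2α - y, y' = 2 - w = 2 - 2α + y
    refine ⟨2 - 2*α + y, 2*α - y, adj_aux hG y _ ⟨hy0, hy1⟩ ⟨by linarith, by linarith⟩
      (Or.inr (Or.inr (Or.inr rfl))), (adj_aux hG (2 - 2*α + y) _
      ⟨by linarith, by linarith⟩ ⟨by linarith, by linarith⟩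
      (Or.inr (Or.inr (Or.inl (by ring))))).symm, ⟨by linarith, by linarith⟩,
      Or.inr (Or.inr rfl)⟩

lemma key_aux
    (hG : ∀ u v, G.Adj u v ↔ ∃ y w, y ∈ Set.Icc (0:ℝ) 1 ∧ w ∈ Set.Icc α (1+α) ∧
      w ∈ ({y, y + 2*α, 2 - y, 2*α - y} : Set ℝ) ∧
      ((u = Sum.inl y ∧ v = Sum.inr w) ∨ (u = Sum.inr w ∧ v = Sum.inl y)))
    (h0 : 0 < α) (h1 : α < 1) :
    ∀ n : ℕ, ∀ (a : ℝ) (b c : ℤ), (a = 1 ∨ a = -1) → b.natAbs = n →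
      ∀ y z : ℝ, y ∈ Set.Icc (0:ℝ) 1 → z ∈ Set.Icc (0:ℝ) 1 →
      z = a * y + 2*α*b + 2*c →
      G.Reachable (Sum.inl y) (Sum.inl z) ∧
        G.dist (Sum.inl y) (Sum.inl z) ≤ 2 * n := by
  intro n
  induction n with
  | zero =>
    intro a b c ha hb y z hy hz hzeq
    have hb0 : b = 0 := by omega
    subst hb0
    have hzy : z = y := by
      rcases ha with rfl | rfl
      · have hcl : (-1:ℝ) ≤ 2*(c:ℤ) := by push_cast; push_cast at hzeq; nlinarith [hy.1, hy.2, hz.1, hz.2]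
        have hcu : ((2*c : ℤ) : ℝ) ≤ 1 := by push_cast; push_cast at hzeq; nlinarith [hy.1, hy.2, hz.1, hz.2]
        have h1' : (-1:ℤ) ≤ 2*c := by exact_mod_cast hcl
        have h2' : (2*c : ℤ) ≤ 1 := by exact_mod_cast hcu
        have : c = 0 := by omega
        subst this
        push_cast at hzeq; linarith
      · have hcl : (0:ℝ) ≤ 2*(c:ℤ) := by push_cast; push_cast at hzeq; nlinarith [hy.1, hy.2, hz.1, hz.2]
        have hcu : ((2*c : ℤ) : ℝ) ≤ 2 := by push_cast; push_cast at hzeq; nlinarith [hy.1, hy.2, hz.1, hz.2]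
        have h1' : (0:ℤ) ≤ 2*c := by exact_mod_cast hcl
        have h2' : (2*c : ℤ) ≤ 2 := by exact_mod_cast hcu
        have : c = 0 ∨ c = 1 := by omega
        rcases this with rfl | rfl
        · push_cast at hzeq
          have : y = 0 := le_antisymm (by linarith [hz.1]) hy.1
          rw [this] at hzeq ⊢; linarith
        · push_cast at hzeq
          have : y = 1 := le_antisymm hy.2 (by linarith [hz.2])
          rw [this] at hzeq ⊢; linarith
    rw [hzy]
    exact ⟨SimpleGraph.Reachable.refl _, by simp⟩
  | succ n IH =>
    intro a b c ha hb y z hy hz hzeq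
    have hbne : b ≠ 0 := by omega
    have hsign : (a = 1 ∧ 0 < b) ∨ (a = -1 ∧ b < 0) ∨ (a = 1 ∧ b < 0) ∨ (a = -1 ∧ 0 < b) := by
      rcases ha with rfl | rfl <;> rcases lt_or_gt_of_ne hbne with h | h <;> tauto
    rcases hsign with ⟨rfl, hbpos⟩ | ⟨rfl, hbneg⟩ | ⟨rfl, hbneg⟩ | ⟨rfl, hbpos⟩
    · -- a = 1, b > 0 : plus move, new b = b - 1
      obtain ⟨y', w, hA1, hA2, hy', hforms⟩ := step_plus hG h0 h1 y hy
      rcases hforms with hf | hf | hf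
      · obtain ⟨hr, hd⟩ := IH 1 (b-1) c (Or.inl rfl) (by omega) y' z hy' hz
          (by rw [hzeq, hf]; push_cast; ring)
        have := combine_aux hA1 hA2 hr (2*n) hd; exact ⟨this.1, by omega⟩
      · obtain ⟨hr, hd⟩ := IH (-1) (b-1) (c+1) (Or.inr rfl) (by omega) y' z hy' hz
          (by rw [hzeq, hf]; push_cast; ring)
        have := combine_aux hA1 hA2 hr (2*n) hd; exact ⟨this.1, by omega⟩
      · obtain ⟨hr, hd⟩ := IH 1 (b-1) (c+1) (Or.inl rfl) (by omega) y' z hy' hz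
          (by rw [hzeq, hf]; push_cast; ring)
        have := combine_aux hA1 hA2 hr (2*n) hd; exact ⟨this.1, by omega⟩
    · -- a = -1, b < 0 : plus move, new b = b + 1
      obtain ⟨y', w, hA1, hA2, hy', hforms⟩ := step_plus hG h0 h1 y hy
      rcases hforms with hf | hf | hf
      · obtain ⟨hr, hd⟩ := IH (-1) (b+1) c (Or.inr rfl) (by omega) y' z hy' hz
          (by rw [hzeq, hf]; push_cast; ring)
        have := combine_aux hA1 hA2 hr (2*n) hd; exact ⟨this.1, by omega⟩
      · obtain ⟨hr, hd⟩ := IH 1 (b+1) (c-1) (Or.inl rfl) (by omega) y' z hy' hz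
          (by rw [hzeq, hf]; push_cast; ring)
        have := combine_aux hA1 hA2 hr (2*n) hd; exact ⟨this.1, by omega⟩
      · obtain ⟨hr, hd⟩ := IH (-1) (b+1) (c-1) (Or.inr rfl) (by omega) y' z hy' hz
          (by rw [hzeq, hf]; push_cast; ring)
        have := combine_aux hA1 hA2 hr (2*n) hd; exact ⟨this.1, by omega⟩
    · -- a = 1, b < 0 : minus move, new b = b + 1
      obtain ⟨y', w, hA1, hA2, hy', hforms⟩ := step_minus hG h0 h1 y hy
      rcases hforms with hf | hf | hf
      · obtain ⟨hr, hd⟩ := IH 1 (b+1) c (Or.inl rfl) (by omega) y' z hy' hz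
          (by rw [hzeq, hf]; push_cast; ring)
        have := combine_aux hA1 hA2 hr (2*n) hd; exact ⟨this.1, by omega⟩
      · obtain ⟨hr, hd⟩ := IH (-1) (b+1) c (Or.inr rfl) (by omega) y' z hy' hz
          (by rw [hzeq, hf]; push_cast; ring)
        have := combine_aux hA1 hA2 hr (2*n) hd; exact ⟨this.1, by omega⟩
      · obtain ⟨hr, hd⟩ := IH 1 (b+1) (c-1) (Or.inl rfl) (by omega) y' z hy' hz
          (by rw [hzeq, hf]; push_cast; ring)
        have := combine_aux hA1 hA2 hr (2*n) hd; exact ⟨this.1, by omega⟩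
    · -- a = -1, b > 0 : minus move, new b = b - 1
      obtain ⟨y', w, hA1, hA2, hy', hforms⟩ := step_minus hG h0 h1 y hy
      rcases hforms with hf | hf | hf
      · obtain ⟨hr, hd⟩ := IH (-1) (b-1) c (Or.inr rfl) (by omega) y' z hy' hz
          (by rw [hzeq, hf]; push_cast; ring)
        have := combine_aux hA1 hA2 hr (2*n) hd; exact ⟨this.1, by omega⟩
      · obtain ⟨hr, hd⟩ := IH 1 (b-1) c (Or.inl rfl) (by omega) y' z hy' hz
          (by rw [hzeq, hf]; push_cast; ring)
        have := combine_aux hA1 hA2 hr (2*n) hd; exact ⟨this.1, by omega⟩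
      · obtain ⟨hr, hd⟩ := IH (-1) (b-1) (c+1) (Or.inr rfl) (by omega) y' z hy' hz
          (by rw [hzeq, hf]; push_cast; ring)
        have := combine_aux hA1 hA2 hr (2*n) hd; exact ⟨this.1, by omega⟩

end Aux

/-- Lemma 1: If γ ∈ ⟨Γ⟩ has the form γ(x) = a·x + 2α·b + 2c and
y, γ(y) ∈ [0,1], then the graph distance in the Laczkovich graph G between the
I-vertices y and γ(y) is at most 2|b|. -/
theorem stmt3 (α : ℝ) (hirr : Irrational α) (h0 : 0 < α) (h1 : α < 1)
    (Γ : Set (ℝ ≃ᵢ ℝ))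
    (hΓ : Γ = {f | (∀ x, f x = x) ∨ (∀ x, f x = x + 2*α) ∨
      (∀ x, f x = 2 - x) ∨ (∀ x, f x = 2*α - x)})
    (G : SimpleGraph (ℝ ⊕ ℝ))
    (hG : ∀ u v, G.Adj u v ↔ ∃ y w, y ∈ Set.Icc (0:ℝ) 1 ∧ w ∈ Set.Icc α (1+α) ∧
      w ∈ ({y, y + 2*α, 2 - y, 2*α - y} : Set ℝ) ∧
      ((u = Sum.inl y ∧ v = Sum.inr w) ∨ (u = Sum.inr w ∧ v = Sum.inl y)))
    (γ : ℝ ≃ᵢ ℝ) (hγ : γ ∈ Subgroup.closure Γ)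
    (a : ℝ) (b c : ℤ) (ha : a = 1 ∨ a = -1)
    (hform : ∀ x : ℝ, γ x = a * x + 2*α*b + 2*c)
    (y : ℝ) (hy : y ∈ Set.Icc (0:ℝ) 1) (hγy : γ y ∈ Set.Icc (0:ℝ) 1) :
    G.Reachable (Sum.inl y) (Sum.inl (γ y)) ∧
    G.dist (Sum.inl y) (Sum.inl (γ y)) ≤ 2 * b.natAbs := by
  exact key_aux hG h0 h1 b.natAbs a b c ha rfl y (γ y) hy hγy (hform y)
end

section
/- With the setup of the previous statement, define M' by swapping partners along each pair (a, a') with φ(a,a'): M' = {(s,t) : φ(s, M(t))} ∪ M \ {(s, M(s)) : s ∈ S(M)}. Then M' is a Borel perfect matching of H^K covering the same vertices as M, and ∫_A dist_H(x, M'(x)) dλ(x) ≤ ∫_A dist_H(x, M(x)) dλ(x) − λ(S(M)). -/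
/-!
Let `p` exchange the two points of each `φ`-pair and fix everything else. Then `M'` is `m ∘ p`
on `A` and `p ∘ m` on `B`, hence an involution, and for `a ∈ S` the ray conditions give
`dist(a, M'(a)) = |2 - dist(p a, M(p a))|`. Distances to `M` are odd, and `a`, `p a` cannot both
be matched to neighbours (their partners would be two common neighbours of `a` and `p a` in a
forest), so over each pair `{a, p a}` the total distance drops by at least `2`.

Integrating this needs `p` to preserve `λ`. Each pair has a unique midpoint, and by
2-regularity the midpoint is adjacent to nothing else; splitting `S` Borel-measurably into `U`
and `p(U)`, the map `p` is the composite of the three edge swaps `U ↔ mid(U)`,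
`p(U) ↔ mid(U)`, `U ↔ mid(U)`, each measure preserving by hypothesis. Borel measurability rests
on the Lusin–Souslin theorem: in a forest geodesics are unique, so `{dist = k}` is an injective
image of a Borel set of paths.
-/

open MeasureTheory

lemma measurable_of_measurableSet_graph {α β : Type*} [MeasurableSpace α] [StandardBorelSpace α]
    [MeasurableSpace β] [StandardBorelSpace β] {f : α → β}
    (hf : MeasurableSet {q : α × β | f q.1 = q.2}) : Measurable f := by
  intro t ht
  have himage : f ⁻¹' t = Prod.fst '' ({q : α × β | f q.1 = q.2} ∩ Prod.snd ⁻¹' t) := by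
    ext x
    refine ⟨fun hx => ⟨(x, f x), ⟨rfl, hx⟩, rfl⟩, ?_⟩
    rintro ⟨⟨x, y⟩, ⟨hxy, hy⟩, rfl⟩
    change f x = y at hxy
    exact hxy ▸ hy
  rw [himage]
  refine (hf.inter (measurable_snd ht)).image_of_measurable_injOn measurable_fst ?_
  rintro ⟨x, y⟩ ⟨hxy, -⟩ ⟨x', y'⟩ ⟨hxy', -⟩ (rfl : x = x')
  exact Prod.ext rfl ((hxy : f x = y).symm.trans hxy')

section SwapAlong

variable {α : Type*}

open Classical in
noncomputable def swapAlong (U : Set α) (g : α → α) (x : α) : α :=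
  if x ∈ U then g x else if h : x ∈ g '' U then h.choose else x

variable {U : Set α} {g : α → α}

lemma swapAlong_of_mem {x : α} (hx : x ∈ U) : swapAlong U g x = g x := by
  simp [swapAlong, hx]

lemma swapAlong_of_notMem {x : α} (hx : x ∉ U) (hx' : x ∉ g '' U) : swapAlong U g x = x := by
  simp only [swapAlong, hx, hx', if_false, dite_false]

lemma swapAlong_apply_of_mem (hinj : Set.InjOn g U) (hdisj : Disjoint U (g '' U)) {x : α}
    (hx : x ∈ U) : swapAlong U g (g x) = x := by
  have hgx : g x ∈ g '' U := ⟨x, hx, rfl⟩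
  simp only [swapAlong, Set.disjoint_right.mp hdisj hgx, hgx, if_false, dite_true]
  exact hinj hgx.choose_spec.1 hx hgx.choose_spec.2

lemma swapAlong_eq_iff (hinj : Set.InjOn g U) (hdisj : Disjoint U (g '' U)) {x y : α} :
    swapAlong U g x = y ↔
      (x ∈ U ∧ g x = y) ∨ (y ∈ U ∧ g y = x) ∨ (x ∉ U ∧ x ∉ g '' U ∧ x = y) := by
  by_cases hx : x ∈ U
  · have hxg : x ∉ g '' U := Set.disjoint_left.mp hdisj hx
    rw [swapAlong_of_mem hx]
    refine ⟨fun h => .inl ⟨hx, h⟩, ?_⟩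
    rintro (⟨-, h⟩ | ⟨hy, rfl⟩ | ⟨h, -⟩)
    exacts [h, absurd ⟨y, hy, rfl⟩ hxg, absurd hx h]
  by_cases hxg : x ∈ g '' U
  · obtain ⟨z, hz, rfl⟩ := hxg
    rw [swapAlong_apply_of_mem hinj hdisj hz]
    refine ⟨fun h => .inr (.inl ⟨h ▸ hz, h ▸ rfl⟩), ?_⟩
    rintro (⟨h, -⟩ | ⟨hy, h⟩ | ⟨-, h, -⟩)
    exacts [absurd h hx, hinj hz hy h.symm, absurd ⟨z, hz, rfl⟩ h]
  · rw [swapAlong_of_notMem hx hxg]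
    refine ⟨fun h => .inr (.inr ⟨hx, hxg, h⟩), ?_⟩
    rintro (⟨h, -⟩ | ⟨hy, rfl⟩ | ⟨-, -, h⟩)
    exacts [absurd h hx, absurd ⟨y, hy, rfl⟩ hxg, h]

lemma involutive_swapAlong (hinj : Set.InjOn g U) (hdisj : Disjoint U (g '' U)) :
    Function.Involutive (swapAlong U g) := by
  intro x
  by_cases hx : x ∈ U
  · rw [swapAlong_of_mem hx, swapAlong_apply_of_mem hinj hdisj hx]
  by_cases hxg : x ∈ g '' U
  · obtain ⟨z, hz, rfl⟩ := hxg
    rw [swapAlong_apply_of_mem hinj hdisj hz, swapAlong_of_mem hz]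
  · rw [swapAlong_of_notMem hx hxg, swapAlong_of_notMem hx hxg]

lemma swapAlong_eq_or_adj {G : SimpleGraph α} (hinj : Set.InjOn g U)
    (hdisj : Disjoint U (g '' U)) (hadj : ∀ x ∈ U, G.Adj x (g x)) (x : α) :
    swapAlong U g x = x ∨ G.Adj x (swapAlong U g x) := by
  by_cases hx : x ∈ U
  · exact .inr (swapAlong_of_mem hx ▸ hadj x hx)
  by_cases hxg : x ∈ g '' U
  · obtain ⟨z, hz, rfl⟩ := hxg
    rw [swapAlong_apply_of_mem hinj hdisj hz]
    exact .inr (hadj z hz).symm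
  · exact .inl (swapAlong_of_notMem hx hxg)

lemma measurable_swapAlong [MeasurableSpace α] [StandardBorelSpace α] (hU : MeasurableSet U)
    (hg : Measurable g) (hinj : Set.InjOn g U) (hdisj : Disjoint U (g '' U)) :
    Measurable (swapAlong U g) := by
  refine measurable_of_measurableSet_graph ?_
  simp only [swapAlong_eq_iff hinj hdisj, Set.ofPred_or, Set.ofPred_and]
  have hgU : MeasurableSet (g '' U) := hU.image_of_measurable_injOn hg hinj
  refine .union (.inter (measurable_fst hU) ?_) (.union (.inter (measurable_snd hU) ?_)
    (.inter (measurable_fst hU.compl) (.inter (measurable_fst hgU.compl) ?_)))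
  all_goals exact measurableSet_eq_fun (by fun_prop) (by fun_prop)

end SwapAlong

lemma preimage_subset_and_forall_notMem {α : Type*} {S U : Set α} {p : α → α}
    (hpinv : Function.Involutive p)
    (hpoff : ∀ x ∉ S, p x = x) (hUS : U ⊆ S) (hU : ∀ x ∈ S, x ∈ U ↔ p x ∉ U) :
    p ⁻¹' U ⊆ S ∧ ∀ x ∈ p ⁻¹' U, p x ∉ p ⁻¹' U := by
  have hU'S : p ⁻¹' U ⊆ S := fun x hx => by_contra fun h => h (hUS (hpoff x h ▸ hx))
  refine ⟨hU'S, fun x hx hpx => (hU x (hU'S hx)).mp ?_ hx⟩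
  rwa [Set.mem_preimage, hpinv x] at hpx

namespace SimpleGraph

variable {V : Type*} {G : SimpleGraph V}

lemma IsAcyclic.dist_eq_length (hG : G.IsAcyclic) {u v : V} {p : G.Walk u v} (hp : p.IsPath) :
    G.dist u v = p.length := by
  obtain ⟨q, hq, hql⟩ := p.reachable.exists_path_of_dist
  rw [← hql, Subtype.mk.inj ((hG.subsingleton_path u v).elim ⟨q, hq⟩ ⟨p, hp⟩)]

lemma IsAcyclic.eq_of_adj_of_adj (hG : G.IsAcyclic) {x y z z' : V} (hxy : x ≠ y)
    (hxz : G.Adj x z) (hzy : G.Adj z y) (hxz' : G.Adj x z') (hz'y : G.Adj z' y) : z = z' := by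
  have hpath : ∀ {w} (h₁ : G.Adj x w) (h₂ : G.Adj w y), (Walk.cons h₁ (Walk.cons h₂ .nil)).IsPath :=
    fun h₁ h₂ => by simp [h₁.ne, h₂.ne, hxy]
  simpa using congrArg (fun q : G.Path x y => q.1.getVert 1)
    ((hG.subsingleton_path x y).elim ⟨_, hpath hxz hzy⟩ ⟨_, hpath hxz' hz'y⟩)

lemma eq_or_eq_of_adj_of_encard_le_two {v x y z : V} (hdeg : {w | G.Adj v w}.encard ≤ 2)
    (hx : G.Adj v x) (hy : G.Adj v y) (hxy : x ≠ y) (hz : G.Adj v z) : z = x ∨ z = y := by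
  have hsub : ({x, y} : Set V) ⊆ {w | G.Adj v w} := by
    rintro w (rfl | rfl) <;> assumption
  have heq := ((Set.toFinite _).eq_of_subset_of_encard_le hsub
    (hdeg.trans (Set.encard_pair hxy).ge))
  simpa using heq.symm.subset hz

lemma ne_of_dist_eq_two {x y : V} (h : G.dist x y = 2) : x ≠ y := by
  rintro rfl
  simp at h

lemma exists_adj_adj_of_dist_eq_two {x y : V} (h : G.dist x y = 2) :
    ∃ z, G.Adj x z ∧ G.Adj z y := by
  have hne : G.dist x y ≠ 0 := by omega
  obtain ⟨w, hw⟩ := (Reachable.of_dist_ne_zero hne).exists_walk_length_eq_dist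
  rw [h] at hw
  refine ⟨w.getVert 1, by simpa using w.adj_getVert_succ (i := 0) (by omega), ?_⟩
  simpa [← hw] using w.adj_getVert_succ (i := 1) (by omega)

lemma mem_iff_notMem_of_adj {A B : Set V} (hdisj : Disjoint A B)
    (hbip : ∀ u v, G.Adj u v → (u ∈ A ∧ v ∈ B) ∨ (u ∈ B ∧ v ∈ A)) {u v : V} (huv : G.Adj u v) :
    u ∈ A ↔ v ∉ A := by
  rcases hbip u v huv with ⟨hu, hv⟩ | ⟨hu, hv⟩
  · exact iff_of_true hu (Set.disjoint_right.mp hdisj hv)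
  · exact iff_of_false (Set.disjoint_right.mp hdisj hu) (not_not.mpr hv)

lemma mem_iff_notMem_of_odd_dist {A : Set V} (hA : ∀ u v, G.Adj u v → (u ∈ A ↔ v ∉ A))
    {x y : V} (h : Odd (G.dist x y)) : x ∈ A ↔ y ∉ A := by
  classical
  let c : G.Coloring Bool := Coloring.mk (fun v => decide (v ∈ A)) fun {u v} huv h => by
    rw [decide_eq_decide] at h
    exact (iff_not_self (h.symm.trans (hA u v huv))).elim
  obtain ⟨w, hw⟩ := (Reachable.of_dist_ne_zero h.pos.ne').exists_walk_length_eq_dist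
  have := (c.odd_length_iff_not_congr w).mp (hw ▸ h)
  simp only [c, Coloring.mk, RelHom.coeFn_mk, decide_eq_true_eq] at this
  tauto

lemma IsAcyclic.not_dist_eq_one_and_dist_eq_one (hG : G.IsAcyclic) {m : V → V}
    (hm : Function.Injective m) {x y : V} (hxy : x ≠ y)
    (hx : (G.dist x (m y) : ℤ) = |2 - (G.dist y (m y) : ℤ)|)
    (hy : (G.dist y (m x) : ℤ) = |2 - (G.dist x (m x) : ℤ)|) :
    ¬ (G.dist x (m x) = 1 ∧ G.dist y (m y) = 1) := by
  rintro ⟨h₁, h₂⟩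
  rw [h₁] at hy
  rw [h₂] at hx
  norm_num at hx hy
  rw [dist_eq_one_iff_adj] at h₁ h₂
  exact hxy (hm (hG.eq_of_adj_of_adj hxy h₁ hy.symm hx h₂.symm))

lemma exists_walk_getVert_eq :
    ∀ (k : ℕ) (f : ℕ → V), (∀ i < k, G.Adj (f i) (f (i + 1))) →
      ∃ w : G.Walk (f 0) (f k), w.length = k ∧ ∀ i ≤ k, w.getVert i = f i
  | 0, _, _ => ⟨.nil, rfl, fun i hi => by simp [Nat.le_zero.mp hi]⟩
  | k + 1, f, hf => by
    obtain ⟨w, hwl, hwv⟩ :=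
      exists_walk_getVert_eq k (fun i => f (i + 1)) fun i hi => hf (i + 1) (by omega)
    refine ⟨.cons (hf 0 k.succ_pos) w, by simp [hwl], ?_⟩
    rintro (_ | i) hi
    · simp
    · simpa using hwv i (by omega)

/-- Paths of length `k`, padded with their endpoint so that they live in the standard Borel space
`ℕ → V`. -/
def pathSeqs (G : SimpleGraph V) (k : ℕ) : Set (ℕ → V) :=
  {f | (∀ i < k, G.Adj (f i) (f (i + 1))) ∧ Set.InjOn f (Set.Iic k) ∧ ∀ i, k ≤ i → f i = f k}

lemma exists_isPath_of_mem_pathSeqs {k : ℕ} {f : ℕ → V} (hf : f ∈ G.pathSeqs k) :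
    ∃ w : G.Walk (f 0) (f k), w.IsPath ∧ w.length = k ∧ ∀ i ≤ k, w.getVert i = f i := by
  obtain ⟨w, hwl, hwv⟩ := exists_walk_getVert_eq k f hf.1
  refine ⟨w, (Walk.IsPath.getVert_injOn_iff w).mp fun i hi j hj hij => ?_, hwl, hwv⟩
  simp only [Set.mem_ofPred_eq, hwl] at hi hj
  exact hf.2.1 hi hj (by rwa [← hwv i hi, ← hwv j hj])

lemma IsAcyclic.image_pathSeqs (hG : G.IsAcyclic) {k : ℕ} (hk : 0 < k) :
    (fun f : ℕ → V => (f 0, f k)) '' G.pathSeqs k = {q | G.dist q.1 q.2 = k} := by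
  ext ⟨x, y⟩
  constructor
  · rintro ⟨f, hf, hfxy⟩
    obtain ⟨w, hw, hwl, -⟩ := exists_isPath_of_mem_pathSeqs hf
    obtain ⟨rfl, rfl⟩ := Prod.mk.inj hfxy
    simpa [hwl] using hG.dist_eq_length hw
  · intro hd
    change G.dist x y = k at hd
    have hne : G.dist x y ≠ 0 := by omega
    obtain ⟨w, hw, hwl⟩ := (Reachable.of_dist_ne_zero hne).exists_path_of_dist
    rw [hd] at hwl
    refine ⟨w.getVert, ⟨fun i hi => w.adj_getVert_succ (by omega), fun i hi j hj => ?_,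
      fun i hi => by rw [w.getVert_of_length_le (by omega), w.getVert_of_length_le (by omega)]⟩,
      by simp [← hwl]⟩
    exact hw.getVert_injOn (by simp only [Set.mem_Iic] at hi; simp; omega)
      (by simp only [Set.mem_Iic] at hj; simp; omega)

lemma IsAcyclic.injOn_pathSeqs (hG : G.IsAcyclic) (k : ℕ) :
    Set.InjOn (fun f : ℕ → V => (f 0, f k)) (G.pathSeqs k) := by
  intro f hf g hg hfg
  obtain ⟨h0, hk⟩ := Prod.mk.inj hfg
  obtain ⟨wf, hwf, -, hwfv⟩ := exists_isPath_of_mem_pathSeqs hf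
  obtain ⟨wg, hwg, -, hwgv⟩ := exists_isPath_of_mem_pathSeqs hg
  have hw : wf = wg.copy h0.symm hk.symm := Subtype.mk.inj
    ((hG.subsingleton_path _ _).elim ⟨wf, hwf⟩ ⟨_, (Walk.isPath_copy _ _ _).mpr hwg⟩)
  funext i
  rcases le_or_gt i k with hi | hi
  · rw [← hwfv i hi, ← hwgv i hi, hw, Walk.getVert_copy]
  · rw [hf.2.2 i hi.le, hg.2.2 i hi.le, hk]

section Measurable

variable [MeasurableSpace V] [StandardBorelSpace V]

lemma measurableSet_pathSeqs (hadj : MeasurableSet {q : V × V | G.Adj q.1 q.2}) (k : ℕ) :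
    MeasurableSet (G.pathSeqs k) := by
  have hadj' : ∀ i, MeasurableSet {f : ℕ → V | G.Adj (f i) (f (i + 1))} := fun i =>
    hadj.preimage (f := fun f : ℕ → V => (f i, f (i + 1)))
      ((measurable_pi_apply i).prodMk (measurable_pi_apply (i + 1)))
  have heq : ∀ i j, MeasurableSet {f : ℕ → V | f i = f j} := fun i j =>
    measurableSet_eq_fun (measurable_pi_apply i) (measurable_pi_apply j)
  simp only [pathSeqs, Set.InjOn, Set.mem_Iic, Set.ofPred_and, Set.ofPred_forall]
  refine .inter (.iInter fun i => .iInter fun _ => hadj' i) (.inter ?_ ?_)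
  · refine .iInter fun i => .iInter fun _ => .iInter fun j => .iInter fun _ => ?_
    by_cases hij : i = j
    · simp [hij]
    · simp only [hij, imp_false]
      exact (heq i j).compl
  · exact .iInter fun i => .iInter fun _ => heq i k

lemma IsAcyclic.measurable_dist (hG : G.IsAcyclic)
    (hadj : MeasurableSet {q : V × V | G.Adj q.1 q.2}) :
    Measurable fun q : V × V => G.dist q.1 q.2 := by
  have hpos : ∀ k, 0 < k → MeasurableSet {q : V × V | G.dist q.1 q.2 = k} := fun k hk => by
    rw [← hG.image_pathSeqs hk]
    exact (measurableSet_pathSeqs hadj k).image_of_measurable_injOn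
      ((measurable_pi_apply 0).prodMk (measurable_pi_apply k)) (hG.injOn_pathSeqs k)
  refine measurable_to_countable' fun k => ?_
  rcases Nat.eq_zero_or_pos k with rfl | hk
  · have hzero : (fun q : V × V => G.dist q.1 q.2) ⁻¹' {0} =
        (⋃ k, {q : V × V | G.dist q.1 q.2 = k + 1})ᶜ := by
      ext q
      simp only [Set.mem_preimage, Set.mem_singleton_iff, Set.mem_compl_iff, Set.mem_iUnion,
        Set.mem_ofPred_eq, not_exists]
      exact ⟨fun h i => by omega,
        fun h => by_contra fun h0 => h _ (Nat.succ_pred_eq_of_ne_zero h0).symm⟩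
    rw [hzero]
    exact (MeasurableSet.iUnion fun k => hpos (k + 1) k.succ_pos).compl
  · exact hpos k hk

end Measurable

variable {S U : Set V} {p : V → V}

open Classical in
noncomputable def midpointOn (G : SimpleGraph V) (S : Set V) (p : V → V) (x : V) : V :=
  if h : x ∈ S ∧ ∃ z, G.Adj x z ∧ G.Adj z (p x) then h.2.choose else x

lemma adj_midpointOn (hp2 : ∀ x ∈ S, G.dist x (p x) = 2) {x : V} (hx : x ∈ S) :
    G.Adj x (G.midpointOn S p x) ∧ G.Adj (G.midpointOn S p x) (p x) := by
  have h : x ∈ S ∧ ∃ z, G.Adj x z ∧ G.Adj z (p x) := ⟨hx, exists_adj_adj_of_dist_eq_two (hp2 x hx)⟩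
  simpa only [midpointOn, dif_pos h] using h.2.choose_spec

lemma midpointOn_of_notMem {x : V} (hx : x ∉ S) : G.midpointOn S p x = x := by
  simp [midpointOn, hx]

lemma IsAcyclic.midpointOn_eq (hG : G.IsAcyclic) (hp2 : ∀ x ∈ S, G.dist x (p x) = 2) {x z : V}
    (hx : x ∈ S) (hxz : G.Adj x z) (hzp : G.Adj z (p x)) : G.midpointOn S p x = z :=
  hG.eq_of_adj_of_adj (ne_of_dist_eq_two (hp2 x hx)) (adj_midpointOn hp2 hx).1
    (adj_midpointOn hp2 hx).2 hxz hzp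

lemma mem_of_involutive_of_dist_eq_two (hpinv : Function.Involutive p)
    (hpoff : ∀ x ∉ S, p x = x) (hp2 : ∀ x ∈ S, G.dist x (p x) = 2) {x : V} (hx : x ∈ S) :
    p x ∈ S := by
  by_contra h
  have := hpoff _ h
  rw [hpinv x] at this
  exact ne_of_dist_eq_two (hp2 x hx) this

lemma IsAcyclic.midpointOn_apply (hG : G.IsAcyclic) (hpinv : Function.Involutive p)
    (hpoff : ∀ x ∉ S, p x = x) (hp2 : ∀ x ∈ S, G.dist x (p x) = 2) {x : V} (hx : x ∈ S) :
    G.midpointOn S p (p x) = G.midpointOn S p x :=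
  hG.midpointOn_eq hp2 (mem_of_involutive_of_dist_eq_two hpinv hpoff hp2 hx)
    (adj_midpointOn hp2 hx).2.symm (by rw [hpinv x]; exact (adj_midpointOn hp2 hx).1.symm)

lemma injOn_midpointOn (hdeg : ∀ v, {w | G.Adj v w}.encard ≤ 2)
    (hp2 : ∀ x ∈ S, G.dist x (p x) = 2) (hUS : U ⊆ S) (hUp : ∀ x ∈ U, p x ∉ U) :
    Set.InjOn (G.midpointOn S p) U := by
  intro x hx x' hx' hxx'
  have hadj := adj_midpointOn hp2 (hUS hx)
  rcases eq_or_eq_of_adj_of_encard_le_two (hdeg _) hadj.1.symm hadj.2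
    (ne_of_dist_eq_two (hp2 x (hUS hx))) (hxx' ▸ (adj_midpointOn hp2 (hUS hx')).1.symm)
    with h | h
  · exact h.symm
  · exact absurd (h ▸ hx') (hUp x hx)

lemma disjoint_image_midpointOn (hSind : ∀ x ∈ S, ∀ y ∈ S, ¬ G.Adj x y)
    (hp2 : ∀ x ∈ S, G.dist x (p x) = 2) (hUS : U ⊆ S) : Disjoint S (G.midpointOn S p '' U) := by
  rw [Set.disjoint_right]
  rintro _ ⟨x, hx, rfl⟩ hbx
  exact hSind x (hUS hx) _ hbx (adj_midpointOn hp2 (hUS hx)).1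

lemma IsAcyclic.measurable_midpointOn [MeasurableSpace V] [StandardBorelSpace V]
    (hG : G.IsAcyclic) (hadj : MeasurableSet {q : V × V | G.Adj q.1 q.2}) (hS : MeasurableSet S)
    (hp : Measurable p) (hp2 : ∀ x ∈ S, G.dist x (p x) = 2) :
    Measurable (G.midpointOn S p) := by
  refine measurable_of_measurableSet_graph ?_
  have hgraph : {q : V × V | G.midpointOn S p q.1 = q.2} =
      {q | q.1 ∈ S ∧ G.Adj q.1 q.2 ∧ G.Adj q.2 (p q.1)} ∪ {q | q.1 ∉ S ∧ q.1 = q.2} := by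
    ext ⟨x, z⟩
    by_cases hx : x ∈ S
    · simp only [Set.mem_ofPred_eq, Set.mem_union, hx, true_and, not_true_eq_false, false_and,
        or_false]
      exact ⟨fun h => h ▸ adj_midpointOn hp2 hx, fun h => hG.midpointOn_eq hp2 hx h.1 h.2⟩
    · simp [midpointOn_of_notMem hx, hx]
  rw [hgraph]
  refine .union (.inter (measurable_fst hS) (.inter hadj ?_))
    (.inter (measurable_fst hS.compl) (measurableSet_eq_fun measurable_fst measurable_snd))
  exact hadj.preimage (f := fun q : V × V => (q.2, p q.1)) (by fun_prop)

lemma IsAcyclic.eq_swapAlong_comp (hG : G.IsAcyclic) (hdeg : ∀ v, {w | G.Adj v w}.encard ≤ 2)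
    (hSind : ∀ x ∈ S, ∀ y ∈ S, ¬ G.Adj x y) (hpinv : Function.Involutive p)
    (hpoff : ∀ x ∉ S, p x = x) (hp2 : ∀ x ∈ S, G.dist x (p x) = 2) (hUS : U ⊆ S)
    (hU : ∀ x ∈ S, x ∈ U ↔ p x ∉ U) :
    p = swapAlong U (G.midpointOn S p) ∘ swapAlong (p ⁻¹' U) (G.midpointOn S p) ∘
      swapAlong U (G.midpointOn S p) := by
  set b := G.midpointOn S p
  obtain ⟨hU'S, hU'p⟩ := preimage_subset_and_forall_notMem hpinv hpoff hUS hU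
  have hUp : ∀ x ∈ U, p x ∉ U := fun x hx => (hU x (hUS hx)).mp hx
  have hinj := injOn_midpointOn hdeg hp2 hUS hUp
  have hinj' := injOn_midpointOn hdeg hp2 hU'S hU'p
  have hdisj := disjoint_image_midpointOn hSind hp2 hUS
  have hdisj' := disjoint_image_midpointOn hSind hp2 hU'S
  have hbp : ∀ x ∈ S, b (p x) = b x := fun x hx => hG.midpointOn_apply hpinv hpoff hp2 hx
  funext x
  simp only [Function.comp_apply]
  by_cases hxU : x ∈ U
  · have hpx : p x ∈ p ⁻¹' U := by simpa [Set.mem_preimage, hpinv x] using hxU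
    rw [swapAlong_of_mem hxU, ← hbp x (hUS hxU),
      swapAlong_apply_of_mem hinj' (hdisj'.mono_left hU'S) hpx,
      swapAlong_of_notMem (hUp x hxU) (Set.disjoint_left.mp hdisj (hU'S hpx))]
  by_cases hxU' : x ∈ p ⁻¹' U
  · rw [swapAlong_of_notMem hxU (Set.disjoint_left.mp hdisj (hU'S hxU')),
      swapAlong_of_mem hxU', ← hbp x (hU'S hxU'),
      swapAlong_apply_of_mem hinj (hdisj.mono_left hUS) hxU']
  have hxS : x ∉ S := fun hx => hxU' (not_not.mp ((hU x hx).not.mp hxU))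
  by_cases hxb : x ∈ b '' U
  · obtain ⟨y, hy, rfl⟩ := hxb
    rw [hpoff _ hxS, swapAlong_apply_of_mem hinj (hdisj.mono_left hUS) hy,
      swapAlong_of_notMem (U := p ⁻¹' U) (hUp y hy) (Set.disjoint_left.mp hdisj' (hUS hy)),
      swapAlong_of_mem hy]
  · have hxb' : x ∉ b '' (p ⁻¹' U) := by
      rintro ⟨y, hy, rfl⟩
      exact hxb ⟨p y, hy, hbp y (hU'S hy)⟩
    rw [hpoff _ hxS, swapAlong_of_notMem hxU hxb, swapAlong_of_notMem hxU' hxb',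
      swapAlong_of_notMem hxU hxb]

theorem IsAcyclic.measurePreserving_of_dist_eq_two [MeasurableSpace V] [StandardBorelSpace V]
    {μ : Measure V} (hG : G.IsAcyclic) (hdeg : ∀ v, {w | G.Adj v w}.encard ≤ 2)
    (hadj : MeasurableSet {q : V × V | G.Adj q.1 q.2})
    (hpres : ∀ f : V ≃ᵐ V, (∀ x, f x = x ∨ G.Adj x (f x)) → MeasurePreserving f μ μ)
    (hS : MeasurableSet S) (hSind : ∀ x ∈ S, ∀ y ∈ S, ¬ G.Adj x y) (hp : Measurable p)
    (hpinv : Function.Involutive p) (hpoff : ∀ x ∉ S, p x = x)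
    (hp2 : ∀ x ∈ S, G.dist x (p x) = 2) : MeasurePreserving p μ μ := by
  have hb := hG.measurable_midpointOn hadj hS hp hp2
  have hswap : ∀ W ⊆ S, MeasurableSet W → (∀ x ∈ W, p x ∉ W) →
      MeasurePreserving (swapAlong W (G.midpointOn S p)) μ μ := fun W hWS hW hWp => by
    have hinj := injOn_midpointOn hdeg hp2 hWS hWp
    have hdisj := (disjoint_image_midpointOn hSind hp2 hWS).mono_left hWS
    exact hpres (.ofInvolutive _ (involutive_swapAlong hinj hdisj)
      (measurable_swapAlong hW hb hinj hdisj))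
      (swapAlong_eq_or_adj hinj hdisj fun x hx => (adj_midpointOn hp2 (hWS hx)).1)
  -- a measurable linear order on `V` picks one point out of each pair `{x, p x}`
  obtain ⟨e, he⟩ := exists_measurableEmbedding_real V
  set U := {x | x ∈ S ∧ e x < e (p x)}
  have hUS : U ⊆ S := fun x hx => hx.1
  have hU : ∀ x ∈ S, x ∈ U ↔ p x ∉ U := fun x hx => by
    have hne : e x ≠ e (p x) := he.injective.ne (ne_of_dist_eq_two (hp2 x hx))
    simp only [U, Set.mem_ofPred_eq, hx, mem_of_involutive_of_dist_eq_two hpinv hpoff hp2 hx,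
      hpinv x, true_and, not_lt]
    exact ⟨le_of_lt, fun h => lt_of_le_of_ne h hne⟩
  have hUm : MeasurableSet U := hS.inter (measurableSet_lt he.measurable (he.measurable.comp hp))
  obtain ⟨hU'S, hU'p⟩ := preimage_subset_and_forall_notMem hpinv hpoff hUS hU
  have hσ := hswap U hUS hUm fun x hx => (hU x (hUS hx)).mp hx
  rw [hG.eq_swapAlong_comp hdeg hSind hpinv hpoff hp2 hUS hU]
  exact hσ.comp ((hswap _ hU'S (hp hUm) hU'p).comp hσ)

end SimpleGraph

section Partner

variable {V : Type*} {A : Set V} {φ : V → V → Prop}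

open Classical in
noncomputable def partnerIn (A : Set V) (φ : V → V → Prop) (x : V) : V :=
  if h : x ∈ A ∧ ∃ y ∈ A, φ x y then h.2.choose else x

lemma partnerIn_spec {x : V} (hx : x ∈ {x ∈ A | ∃ y ∈ A, φ x y}) :
    partnerIn A φ x ∈ A ∧ φ x (partnerIn A φ x) := by
  have h : x ∈ A ∧ ∃ y ∈ A, φ x y := hx
  rw [partnerIn, dif_pos h]
  exact h.2.choose_spec

lemma partnerIn_of_notMem {x : V} (hx : x ∉ {x ∈ A | ∃ y ∈ A, φ x y}) : partnerIn A φ x = x :=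
  dif_neg hx

lemma partnerIn_eq (huniq : ∀ x ∈ A, ∀ y ∈ A, ∀ z ∈ A, φ x y → φ x z → y = z) {x y : V}
    (hx : x ∈ A) (hy : y ∈ A) (hxy : φ x y) : partnerIn A φ x = y :=
  have hS : x ∈ {x ∈ A | ∃ y ∈ A, φ x y} := ⟨hx, y, hy, hxy⟩
  huniq x hx _ (partnerIn_spec hS).1 y hy (partnerIn_spec hS).2 hxy

lemma mem_iff_partnerIn_mem {x : V} : partnerIn A φ x ∈ A ↔ x ∈ A := by
  by_cases hx : x ∈ {x ∈ A | ∃ y ∈ A, φ x y}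
  · exact iff_of_true (partnerIn_spec hx).1 hx.1
  · rw [partnerIn_of_notMem hx]

lemma involutive_partnerIn (hsymm : ∀ x y, φ x y → φ y x)
    (huniq : ∀ x ∈ A, ∀ y ∈ A, ∀ z ∈ A, φ x y → φ x z → y = z) :
    Function.Involutive (partnerIn A φ) := by
  intro x
  by_cases hx : x ∈ {x ∈ A | ∃ y ∈ A, φ x y}
  · obtain ⟨hpA, hpx⟩ := partnerIn_spec hx
    exact partnerIn_eq huniq hpA hx.1 (hsymm _ _ hpx)
  · rw [partnerIn_of_notMem hx, partnerIn_of_notMem hx]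

section Measurable

variable [MeasurableSpace V] [StandardBorelSpace V]

lemma measurableSet_exists_of_unique
    (huniq : ∀ x ∈ A, ∀ y ∈ A, ∀ z ∈ A, φ x y → φ x z → y = z)
    (hΦ : MeasurableSet {q : V × V | q.1 ∈ A ∧ q.2 ∈ A ∧ φ q.1 q.2}) :
    MeasurableSet {x ∈ A | ∃ y ∈ A, φ x y} := by
  have himage : Prod.fst '' {q : V × V | q.1 ∈ A ∧ q.2 ∈ A ∧ φ q.1 q.2} =
      {x ∈ A | ∃ y ∈ A, φ x y} := by
    ext x
    simp
  rw [← himage]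
  refine hΦ.image_of_measurable_injOn measurable_fst ?_
  rintro ⟨x, y⟩ ⟨hx, hy, hxy⟩ ⟨x', y'⟩ ⟨-, hy', hxy'⟩ (rfl : x = x')
  exact Prod.ext rfl (huniq x hx y hy y' hy' hxy hxy')

lemma measurable_partnerIn (huniq : ∀ x ∈ A, ∀ y ∈ A, ∀ z ∈ A, φ x y → φ x z → y = z)
    (hΦ : MeasurableSet {q : V × V | q.1 ∈ A ∧ q.2 ∈ A ∧ φ q.1 q.2}) :
    Measurable (partnerIn A φ) := by
  refine measurable_of_measurableSet_graph ?_
  have hgraph : {q : V × V | partnerIn A φ q.1 = q.2} =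
      {q | q.1 ∈ A ∧ q.2 ∈ A ∧ φ q.1 q.2} ∪
        {q | q.1 ∉ {x ∈ A | ∃ y ∈ A, φ x y} ∧ q.1 = q.2} := by
    ext ⟨x, y⟩
    change partnerIn A φ x = y ↔ (x ∈ A ∧ y ∈ A ∧ φ x y) ∨
      (x ∉ {x ∈ A | ∃ y ∈ A, φ x y} ∧ x = y)
    constructor
    · rintro rfl
      by_cases hx : x ∈ {x ∈ A | ∃ y ∈ A, φ x y}
      · exact .inl ⟨hx.1, partnerIn_spec hx⟩
      · exact .inr ⟨hx, (partnerIn_of_notMem hx).symm⟩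
    · rintro (⟨hx, hy, hxy⟩ | ⟨hx, rfl⟩)
      exacts [partnerIn_eq huniq hx hy hxy, partnerIn_of_notMem hx]
  rw [hgraph]
  exact hΦ.union (.inter (measurable_fst (measurableSet_exists_of_unique huniq hΦ).compl)
    (measurableSet_eq_fun measurable_fst measurable_snd))

end Measurable

end Partner

lemma setIntegral_le_sub_measureReal_of_add_le {V : Type*} [MeasurableSpace V] {μ : Measure V}
    [IsFiniteMeasure μ] {S : Set V} (hS : MeasurableSet S) {p : V → V}
    (hp : MeasurePreserving p μ μ) (hpemb : MeasurableEmbedding p) (hpS : p ⁻¹' S = S)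
    {f g : V → ℝ} (hf : Integrable f μ) (hg : Integrable g μ)
    (h : ∀ x ∈ S, g x + g (p x) + 2 ≤ f x + f (p x)) :
    ∫ x in S, g x ∂μ ≤ ∫ x in S, f x ∂μ - μ.real S := by
  have hcomp : ∀ k : V → ℝ, ∫ x in S, k (p x) ∂μ = ∫ x in S, k x ∂μ := fun k => by
    simpa only [hpS] using hp.setIntegral_preimage_emb hpemb k S
  have hint : ∀ k : V → ℝ, Integrable k μ → Integrable (fun x => k (p x)) μ := fun k hk =>
    (hp.integrable_comp_emb hpemb).mpr hk
  have hmono : ∫ x in S, (g x + g (p x) + 2) ∂μ ≤ ∫ x in S, (f x + f (p x)) ∂μ :=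
    setIntegral_mono_on ((hg.add (hint g hg)).add (integrable_const 2)).integrableOn
    (hf.add (hint f hf)).integrableOn hS h
  rw [integral_add (f := fun x => g x + g (p x)) (hg.add (hint g hg)).integrableOn
      (integrable_const 2).integrableOn,
    integral_add hg.integrableOn (hint g hg).integrableOn,
    integral_add hf.integrableOn (hint f hf).integrableOn, hcomp, hcomp, setIntegral_const,
    smul_eq_mul] at hmono
  linarith

section Rematch

variable {V : Type*} {A S : Set V} {m p : V → V}

open Classical in
/-- The paper's `M'` when `p` exchanges the two points of each `φ`-pair. -/
noncomputable def rematch (A : Set V) (m p : V → V) (x : V) : V :=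
  if x ∈ A then m (p x) else p (m x)

lemma rematch_of_mem {x : V} (hx : x ∈ A) : rematch A m p x = m (p x) := if_pos hx

lemma rematch_of_notMem {x : V} (hx : x ∉ A) : rematch A m p x = p (m x) := if_neg hx

lemma measurable_rematch [MeasurableSpace V] (hA : MeasurableSet A) (hm : Measurable m)
    (hp : Measurable p) : Measurable (rematch A m p) := by
  classical
  exact Measurable.ite hA (hm.comp hp) (hp.comp hm)

lemma involutive_rematch (hm : Function.Involutive m) (hp : Function.Involutive p)
    (hmA : ∀ x, x ∈ A ↔ m x ∉ A) (hpA : ∀ x, p x ∈ A ↔ x ∈ A) :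
    Function.Involutive (rematch A m p) := by
  intro x
  by_cases hx : x ∈ A
  · rw [rematch_of_mem hx, rematch_of_notMem ((hmA _).mp ((hpA x).mpr hx)), hm, hp]
  · have hmx : m x ∈ A := not_not.mp ((hmA x).not.mp hx)
    rw [rematch_of_notMem hx, rematch_of_mem ((hpA _).mpr hmx), hp, hm]

lemma exists_dist_rematch_eq (G : SimpleGraph V) (hm : Function.Involutive m)
    (hp : Function.Involutive p) (hmA : ∀ x, x ∈ A ↔ m x ∉ A) (hpA : ∀ x, p x ∈ A ↔ x ∈ A)
    (x : V) : ∃ a ∈ A, G.dist x (rematch A m p x) = G.dist a (m (p a)) := by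
  by_cases hx : x ∈ A
  · exact ⟨x, hx, by rw [rematch_of_mem hx]⟩
  · have hmx : m x ∈ A := not_not.mp ((hmA x).not.mp hx)
    refine ⟨p (m x), (hpA _).mpr hmx, ?_⟩
    rw [rematch_of_notMem hx, hp, hm, SimpleGraph.dist_comm]

lemma odd_dist_rematch {G : SimpleGraph V} {K : ℕ} (hm : Function.Involutive m)
    (hp : Function.Involutive p) (hmA : ∀ x, x ∈ A ↔ m x ∉ A) (hpA : ∀ x, p x ∈ A ↔ x ∈ A)
    (hmatch : ∀ x, Odd (G.dist x (m x)) ∧ G.dist x (m x) ≤ K) (hpoff : ∀ x ∉ S, p x = x)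
    (hdistS : ∀ x ∈ S, (G.dist x (m (p x)) : ℤ) = |2 - (G.dist (p x) (m (p x)) : ℤ)|) (x : V) :
    Odd (G.dist x (rematch A m p x)) ∧ G.dist x (rematch A m p x) ≤ K := by
  obtain ⟨a, -, ha⟩ := exists_dist_rematch_eq G hm hp hmA hpA x
  rw [ha]
  by_cases haS : a ∈ S
  · have h := hdistS a haS
    obtain ⟨hodd, hK⟩ := hmatch (p a)
    rw [Nat.odd_iff] at hodd ⊢
    rw [abs_eq_max_neg] at h
    omega
  · rw [hpoff a haS]
    exact hmatch a

lemma dist_rematch_add_le {G : SimpleGraph V} (hG : G.IsAcyclic) (hm : Function.Involutive m)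
    (hp : Function.Involutive p) (hmatch : ∀ x, Odd (G.dist x (m x))) (hSA : S ⊆ A)
    (hpoff : ∀ x ∉ S, p x = x) (hp2 : ∀ x ∈ S, G.dist x (p x) = 2)
    (hdistS : ∀ x ∈ S, (G.dist x (m (p x)) : ℤ) = |2 - (G.dist (p x) (m (p x)) : ℤ)|)
    {x : V} (hx : x ∈ S) :
    (G.dist x (rematch A m p x) : ℝ) + G.dist (p x) (rematch A m p (p x)) + 2 ≤
      G.dist x (m x) + G.dist (p x) (m (p x)) := by
  have hpx : p x ∈ S := SimpleGraph.mem_of_involutive_of_dist_eq_two hp hpoff hp2 hx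
  have h₁ := hdistS x hx
  have h₂ := hdistS (p x) hpx
  rw [hp x] at h₂
  have hne := hG.not_dist_eq_one_and_dist_eq_one hm.injective
    (SimpleGraph.ne_of_dist_eq_two (hp2 x hx)) h₁ h₂
  have hodd₁ := Nat.odd_iff.mp (hmatch x)
  have hodd₂ := Nat.odd_iff.mp (hmatch (p x))
  rw [rematch_of_mem (hSA hx), rematch_of_mem (hSA hpx), hp x]
  have key : (G.dist x (m (p x)) : ℤ) + G.dist (p x) (m x) + 2 ≤
      G.dist x (m x) + G.dist (p x) (m (p x)) := by
    rw [h₁, h₂, abs_eq_max_neg, abs_eq_max_neg]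
    omega
  exact_mod_cast key

lemma integral_dist_rematch_le [MeasurableSpace V] {μ : Measure V} [IsFiniteMeasure μ]
    {G : SimpleGraph V} {K : ℕ} (hG : G.IsAcyclic)
    (hdist : Measurable fun q : V × V => G.dist q.1 q.2) (hA : MeasurableSet A)
    (hS : MeasurableSet S) (hSA : S ⊆ A) (hmm : Measurable m) (hm : Function.Involutive m)
    (hmA : ∀ x, x ∈ A ↔ m x ∉ A) (hmatch : ∀ x, Odd (G.dist x (m x)) ∧ G.dist x (m x) ≤ K)
    (hpm : Measurable p) (hp : Function.Involutive p) (hpA : ∀ x, p x ∈ A ↔ x ∈ A)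
    (hpμ : MeasurePreserving p μ μ) (hpoff : ∀ x ∉ S, p x = x)
    (hp2 : ∀ x ∈ S, G.dist x (p x) = 2)
    (hdistS : ∀ x ∈ S, (G.dist x (m (p x)) : ℤ) = |2 - (G.dist (p x) (m (p x)) : ℤ)|) :
    ∫ x in A, (G.dist x (rematch A m p x) : ℝ) ∂μ ≤
      ∫ x in A, (G.dist x (m x) : ℝ) ∂μ - μ.real S := by
  have hint : ∀ r : V → V, Measurable r → (∀ x, G.dist x (r x) ≤ K) →
      Integrable (fun x => (G.dist x (r x) : ℝ)) μ := fun r hr hK =>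
    .of_bound (measurable_from_nat.comp (hdist.comp (measurable_id.prodMk hr))).aestronglyMeasurable
      K (ae_of_all _ fun x => by simpa using hK x)
  have hf := hint m hmm fun x => (hmatch x).2
  have hg := hint _ (measurable_rematch hA hmm hpm)
    fun x => (odd_dist_rematch hm hp hmA hpA hmatch hpoff hdistS x).2
  have hpS : p ⁻¹' S = S := Set.ext fun x => by
    by_cases hx : x ∈ S
    · exact iff_of_true (SimpleGraph.mem_of_involutive_of_dist_eq_two hp hpoff hp2 hx) hx
    · rw [Set.mem_preimage, hpoff x hx]
  have hSpart := setIntegral_le_sub_measureReal_of_add_le hS hpμ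
    (MeasurableEquiv.ofInvolutive p hp hpm).measurableEmbedding hpS hf hg
    fun x hx => dist_rematch_add_le hG hm hp (fun x => (hmatch x).1) hSA hpoff hp2 hdistS hx
  have hrest : ∫ x in A \ S, (G.dist x (rematch A m p x) : ℝ) ∂μ =
      ∫ x in A \ S, (G.dist x (m x) : ℝ) ∂μ :=
    setIntegral_congr_fun (hA.diff hS) fun x hx => by rw [rematch_of_mem hx.1, hpoff x hx.2]
  rw [← integral_inter_add_sdiff hS hg.integrableOn, ← integral_inter_add_sdiff hS hf.integrableOn,
    Set.inter_eq_right.mpr hSA, hrest]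
  linarith

end Rematch

section RaySwap

variable {V : Type*} {G : SimpleGraph V} {A : Set V} {m : V → V} {φ : V → V → Prop}

lemma iff_dist_eq_two_of_inRay {inRay : V → V → Prop}
    (hray : ∀ x y, inRay x y ↔ G.Reachable x y ∧
      (G.dist y (m x) : ℤ) = |(G.dist x y : ℤ) - (G.dist x (m x) : ℤ)|)
    (hφ : ∀ a a', φ a a' ↔ (G.dist a a' = 2 ∧ inRay a' a ∧ inRay a a')) (a a' : V) :
    φ a a' ↔ G.dist a a' = 2 ∧ (G.dist a (m a') : ℤ) = |2 - (G.dist a' (m a') : ℤ)| ∧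
      (G.dist a' (m a) : ℤ) = |2 - (G.dist a (m a) : ℤ)| := by
  rw [hφ, hray, hray, G.dist_comm (u := a')]
  constructor
  · rintro ⟨h, ⟨-, h₁⟩, ⟨-, h₂⟩⟩
    rw [h] at h₁ h₂
    exact ⟨h, h₁, h₂⟩
  · rintro ⟨h, h₁, h₂⟩
    have hreach : G.Reachable a a' := .of_dist_ne_zero (by omega)
    rw [h]
    exact ⟨rfl, ⟨hreach.symm, h₁⟩, ⟨hreach, h₂⟩⟩

lemma symm_of_inRay {inRay : V → V → Prop}
    (hφ : ∀ a a', φ a a' ↔ (G.dist a a' = 2 ∧ inRay a' a ∧ inRay a a')) {a a' : V}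
    (h : φ a a') : φ a' a := by
  rw [hφ] at h ⊢
  rw [G.dist_comm]
  exact ⟨h.1, h.2.2, h.2.1⟩

lemma measurableSet_of_iff_dist [MeasurableSpace V]
    (hdist : Measurable fun q : V × V => G.dist q.1 q.2) (hm : Measurable m)
    (hφ : ∀ a a', φ a a' ↔ G.dist a a' = 2 ∧
      (G.dist a (m a') : ℤ) = |2 - (G.dist a' (m a') : ℤ)| ∧
      (G.dist a' (m a) : ℤ) = |2 - (G.dist a (m a) : ℤ)|) :
    MeasurableSet {q : V × V | φ q.1 q.2} := by
  have hd : ∀ {f g : V × V → V}, Measurable f → Measurable g →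
      Measurable fun q => (G.dist (f q) (g q) : ℤ) := fun hf hg =>
    measurable_from_nat.comp (hdist.comp (hf.prodMk hg))
  simp only [hφ, Set.ofPred_and]
  refine .inter (measurableSet_eq_fun hdist measurable_const)
    (.inter (measurableSet_eq_fun (hd measurable_fst (hm.comp measurable_snd)) ?_)
      (measurableSet_eq_fun (hd measurable_snd (hm.comp measurable_fst)) ?_))
  · exact (measurable_const.sub (hd measurable_snd (hm.comp measurable_snd))).abs
  · exact (measurable_const.sub (hd measurable_fst (hm.comp measurable_fst))).abs

lemma eq_rematch_partnerIn {m' : V → V} (hm : Function.Involutive m)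
    (hmA : ∀ x, x ∈ A ↔ m x ∉ A)
    (hm'1 : ∀ a a', a ∈ A → a' ∈ A → φ a a' → m' a = m a')
    (hm'2 : ∀ a a', a ∈ A → a' ∈ A → φ a a' → m' (m a) = a')
    (hm'3 : ∀ x, x ∈ A → (¬ ∃ a' ∈ A, φ x a') → m' x = m x ∧ m' (m x) = x) :
    m' = rematch A m (partnerIn A φ) := by
  funext x
  by_cases hx : x ∈ A
  · rw [rematch_of_mem hx]
    by_cases hxS : x ∈ {x ∈ A | ∃ y ∈ A, φ x y}
    · exact hm'1 x _ hx (partnerIn_spec hxS).1 (partnerIn_spec hxS).2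
    · rw [partnerIn_of_notMem hxS]
      exact (hm'3 x hx fun h => hxS ⟨hx, h⟩).1
  · have hmx : m x ∈ A := not_not.mp ((hmA x).not.mp hx)
    rw [rematch_of_notMem hx]
    by_cases hmxS : m x ∈ {x ∈ A | ∃ y ∈ A, φ x y}
    · simpa only [hm x] using hm'2 (m x) _ hmx (partnerIn_spec hmxS).1 (partnerIn_spec hmxS).2
    · rw [partnerIn_of_notMem hmxS]
      simpa only [hm x] using (hm'3 (m x) hmx fun h => hmxS ⟨hmx, h⟩).2

end RaySwap

theorem stmt8_general {V : Type} [MeasurableSpace V] [StandardBorelSpace V]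
    (μ : Measure V) [IsProbabilityMeasure μ]
    (H : SimpleGraph V) (hBorel : MeasurableSet {p : V × V | H.Adj p.1 p.2})
    (hpres : ∀ f : V ≃ᵐ V, (∀ x, f x = x ∨ H.Adj x (f x)) → MeasurePreserving f μ μ)
    (hac : H.IsAcyclic) (hreg : ∀ v, {w | H.Adj v w}.encard = 2)
    (A B : Set V) (hA : MeasurableSet A) (hdisj : Disjoint A B)
    (hbip : ∀ u v, H.Adj u v → (u ∈ A ∧ v ∈ B) ∨ (u ∈ B ∧ v ∈ A))
    (K : ℕ)
    (m : V → V) (hm : Measurable m) (hinv : Function.Involutive m)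
    (hmatch : ∀ x, Odd (H.dist x (m x)) ∧ H.dist x (m x) ≤ K)
    (inRay : V → V → Prop)
    (hray : ∀ x y, inRay x y ↔ H.Reachable x y ∧
      (H.dist y (m x) : ℤ) = |(H.dist x y : ℤ) - (H.dist x (m x) : ℤ)|)
    (φ : V → V → Prop)
    (hφ : ∀ a a', φ a a' ↔ (H.dist a a' = 2 ∧ inRay a' a ∧ inRay a a'))
    (S : Set V) (hS : S = {a ∈ A | ∃ a' ∈ A, φ a a'})
    -- M' : swap partners along φ-pairs, keep M elsewhere
    (m' : V → V)
    (hm'1 : ∀ a a', a ∈ A → a' ∈ A → φ a a' → m' a = m a')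
    (hm'2 : ∀ a a', a ∈ A → a' ∈ A → φ a a' → m' (m a) = a')
    (hm'3 : ∀ x, x ∈ A → (¬ ∃ a' ∈ A, φ x a') → m' x = m x ∧ m' (m x) = x) :
    Measurable m' ∧ Function.Involutive m' ∧
    (∀ x, Odd (H.dist x (m' x)) ∧ H.dist x (m' x) ≤ K) ∧
    ∫ x in A, (H.dist x (m' x) : ℝ) ∂μ ≤
      ∫ x in A, (H.dist x (m x) : ℝ) ∂μ - (μ S).toReal := by
  have hdist := hac.measurable_dist hBorel
  have hφ' := iff_dist_eq_two_of_inRay hray hφ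
  have hcross : ∀ u v, H.Adj u v → (u ∈ A ↔ v ∉ A) := fun _ _ =>
    H.mem_iff_notMem_of_adj hdisj hbip
  have hmA : ∀ x, x ∈ A ↔ m x ∉ A := fun x => H.mem_iff_notMem_of_odd_dist hcross (hmatch x).1
  -- the partner is unique because `hm'2` names it: `a' = m' (m a)`
  have huniq : ∀ x ∈ A, ∀ y ∈ A, ∀ z ∈ A, φ x y → φ x z → y = z :=
    fun x hx y hy z hz hxy hxz => (hm'2 x y hx hy hxy).symm.trans (hm'2 x z hx hz hxz)
  have hΦ : MeasurableSet {q : V × V | q.1 ∈ A ∧ q.2 ∈ A ∧ φ q.1 q.2} :=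
    (measurable_fst hA).inter ((measurable_snd hA).inter (measurableSet_of_iff_dist hdist hm hφ'))
  set p := partnerIn A φ
  have hpm : Measurable p := measurable_partnerIn huniq hΦ
  have hpinv : Function.Involutive p := involutive_partnerIn (fun _ _ => symm_of_inRay hφ) huniq
  have hpA : ∀ x, p x ∈ A ↔ x ∈ A := fun _ => mem_iff_partnerIn_mem
  have hpoff : ∀ x ∉ S, p x = x := fun x hx => partnerIn_of_notMem (hS ▸ hx)
  have hspec := fun x (hx : x ∈ S) => (hφ' x (p x)).mp (partnerIn_spec (hS ▸ hx)).2
  have hp2 : ∀ x ∈ S, H.dist x (p x) = 2 := fun x hx => (hspec x hx).1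
  have hSA : S ⊆ A := hS ▸ fun x hx => hx.1
  have hSm : MeasurableSet S := hS ▸ measurableSet_exists_of_unique huniq hΦ
  have hpμ : MeasurePreserving p μ μ := hac.measurePreserving_of_dist_eq_two
    (fun v => (hreg v).le) hBorel hpres hSm
    (fun x hx y hy hxy => (hcross x y hxy).mp (hSA hx) (hSA hy)) hpm hpinv hpoff hp2
  rw [eq_rematch_partnerIn hinv hmA hm'1 hm'2 hm'3]
  exact ⟨measurable_rematch hA hm hpm, involutive_rematch hinv hpinv hmA hpA,
    odd_dist_rematch hinv hpinv hmA hpA hmatch hpoff fun x hx => (hspec x hx).2.1,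
    integral_dist_rematch_le hac hdist hA hSm hSA hm hinv hmA hmatch hpm hpinv hpA hpμ hpoff hp2
      fun x hx => (hspec x hx).2.1⟩

/-- Claim 1: Swapping partners along each pair (a,a') with φ(a,a')
produces a Borel perfect matching M' of H^K covering the same vertices, with
∫_A dist_H(x,M'(x)) dλ ≤ ∫_A dist_H(x,M(x)) dλ − λ(S(M)). -/
theorem stmt8 {V : Type} [MeasurableSpace V] [StandardBorelSpace V]
    (μ : Measure V) [IsProbabilityMeasure μ]
    (H : SimpleGraph V) (hBorel : MeasurableSet {p : V × V | H.Adj p.1 p.2})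
    (hpres : ∀ f : V ≃ᵐ V, (∀ x, f x = x ∨ H.Adj x (f x)) → MeasurePreserving f μ μ)
    (hac : H.IsAcyclic) (hreg : ∀ v, {w | H.Adj v w}.encard = 2)
    (A B : Set V) (hA : MeasurableSet A) (hAB : A ∪ B = Set.univ) (hdisj : Disjoint A B)
    (hbip : ∀ u v, H.Adj u v → (u ∈ A ∧ v ∈ B) ∨ (u ∈ B ∧ v ∈ A))
    (K : ℕ) (hK : Odd K)
    (m : V → V) (hm : Measurable m) (hinv : Function.Involutive m)
    (hmatch : ∀ x, Odd (H.dist x (m x)) ∧ H.dist x (m x) ≤ K)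
    (inRay : V → V → Prop)
    (hray : ∀ x y, inRay x y ↔ H.Reachable x y ∧
      (H.dist y (m x) : ℤ) = |(H.dist x y : ℤ) - (H.dist x (m x) : ℤ)|)
    (φ : V → V → Prop)
    (hφ : ∀ a a', φ a a' ↔ (H.dist a a' = 2 ∧ inRay a' a ∧ inRay a a'))
    (S : Set V) (hS : S = {a ∈ A | ∃ a' ∈ A, φ a a'})
    -- M' : swap partners along φ-pairs, keep M elsewhere
    (m' : V → V)
    (hm'1 : ∀ a a', a ∈ A → a' ∈ A → φ a a' → m' a = m a')
    (hm'2 : ∀ a a', a ∈ A → a' ∈ A → φ a a' → m' (m a) = a')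
    (hm'3 : ∀ x, x ∈ A → (¬ ∃ a' ∈ A, φ x a') → m' x = m x ∧ m' (m x) = x) :
    Measurable m' ∧ Function.Involutive m' ∧
    (∀ x, Odd (H.dist x (m' x)) ∧ H.dist x (m' x) ≤ K) ∧
    ∫ x in A, (H.dist x (m' x) : ℝ) ∂μ ≤
      ∫ x in A, (H.dist x (m x) : ℝ) ∂μ - (μ S).toReal :=
  stmt8_general μ H hBorel hpres hac hreg A B hA hdisj hbip K m hm hinv hmatch inRay hray φ hφ S hS
    m' hm'1 hm'2 hm'3
end

section
/- Let a, a' ∈ A with dist_H(a,a') = 2, a ∈ r(a'), a' ∈ r(a), in a bi-infinite path component of H. Then dist_H(a, M(a')) ≤ K, dist_H(a', M(a)) ≤ K, and dist_H(a, M(a')) + dist_H(a', M(a)) ≤ dist_H(a, M(a)) + dist_H(a', M(a')) − 2. -/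
/-- On a bi-infinite path (modelled as ℤ with unit steps, bipartition
even/odd, graph distance |x−y|), if a, a' ∈ A satisfy dist(a,a') = 2, a ∈ r(a') and
a' ∈ r(a), then dist(a, M(a')) ≤ K, dist(a', M(a)) ≤ K, and
dist(a,M(a')) + dist(a',M(a)) ≤ dist(a,M(a)) + dist(a',M(a')) − 2. -/
theorem stmt9 (K : ℕ) (hK : Odd K)
    (m : ℤ → ℤ) (hinv : Function.Involutive m)
    (hmatch : ∀ x, Odd (x - m x).natAbs ∧ (x - m x).natAbs ≤ K)
    (r : ℤ → Set ℤ) (hr : ∀ x, r x = if x < m x then Set.Ici x else Set.Iic x)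
    (a a' : ℤ) (ha : Even a) (ha' : Even a')
    (hdist : (a - a').natAbs = 2) (h1 : a ∈ r a') (h2 : a' ∈ r a) :
    (a - m a').natAbs ≤ K ∧ (a' - m a).natAbs ≤ K ∧
    (a - m a').natAbs + (a' - m a).natAbs + 2 ≤
      (a - m a).natAbs + (a' - m a').natAbs := by
  rw [hr] at h1 h2
  obtain ⟨⟨k1, hk1⟩, hb1⟩ := hmatch a
  obtain ⟨⟨k2, hk2⟩, hb2⟩ := hmatch a'
  have hne : m a ≠ m a' := fun h => by
    have h' := congrArg m h
    rw [hinv, hinv] at h'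
    omega
  split at h1 <;> split at h2 <;>
    simp only [Set.mem_Ici, Set.mem_Iic] at h1 h2 <;> omega
end

section
/- Let H be a bi-infinite path with bipartition A ∪ B, K odd, and M a perfect matching of H^K (partners at odd distance ≤ K) such that no pair a, a' ∈ A satisfies φ(a,a') (i.e., S-free). Then for every two vertices a, c ∈ A, one of the rays r(a), r(c) contains the other. -/
/-- Claim 2, S-free case: On the bi-infinite path ℤ, if M is a perfect
matching of H^K with no pair a, a' of even vertices satisfying φ(a,a'), then for any
two even vertices a, c one of the rays r(a), r(c) contains the other. -/
theorem stmt11 (K : ℕ) (hK : Odd K)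
    (m : ℤ → ℤ) (hinv : Function.Involutive m)
    (hmatch : ∀ x, Odd (x - m x).natAbs ∧ (x - m x).natAbs ≤ K)
    (r : ℤ → Set ℤ) (hr : ∀ x, r x = if x < m x then Set.Ici x else Set.Iic x)
    (hSfree : ∀ a c, Even a → Even c →
      ¬((a - c).natAbs = 2 ∧ a ∈ r c ∧ c ∈ r a)) :
    ∀ a c, Even a → Even c → r a ⊆ r c ∨ r c ⊆ r a := by
  classical
  have hOdd : ∀ x, Odd (x - m x) := fun x => Int.natAbs_odd.mp (hmatch x).1
  have hne : ∀ x, m x ≠ x := by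
    intro x h
    have := hOdd x
    rw [h, sub_self] at this
    have h2 := Int.odd_iff.mp this
    norm_num at h2
  -- monotonicity: right propagates up
  have hmono : ∀ x : ℤ, Even x → x < m x → x + 2 < m (x + 2) := by
    intro x hx hxm
    by_contra h
    push_neg at h
    have h2 : m (x + 2) < x + 2 := lt_of_le_of_ne h (hne _)
    apply hSfree x (x + 2) hx (by exact hx.add (by decide))
    refine ⟨by simp, ?_, ?_⟩
    · rw [hr]
      simp only [not_lt.mpr h2.le, if_neg (not_lt.mpr h2.le)]
      simp [Set.mem_Iic]
    · rw [hr, if_pos hxm]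
      simp [Set.mem_Ici]
  have hchainR : ∀ x : ℤ, Even x → x < m x → ∀ n : ℕ,
      x + 2 * (n : ℤ) < m (x + 2 * (n : ℤ)) := by
    intro x hx h n
    induction n with
    | zero => simpa using h
    | succ k ih =>
      have he : Even (x + 2 * (k : ℤ)) := hx.add ⟨(k : ℤ), by ring⟩
      have := hmono _ he ih
      have heq : x + 2 * ((k : ℤ) + 1) = x + 2 * (k : ℤ) + 2 := by ring
      push_cast
      rw [heq]
      exact this
  -- mixed case impossible
  have key : ∀ a c : ℤ, Even a → Even c → a < m a → m c < c → False := by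
    intro a c ha hc hra hlc
    rcases le_or_gt a c with h | h
    · obtain ⟨n, hn⟩ : ∃ n : ℕ, c = a + 2 * (n : ℤ) := by
        obtain ⟨k, hk⟩ := hc.sub ha
        exact ⟨k.toNat, by omega⟩
      have := hchainR a ha hra n
      rw [← hn] at this
      exact absurd this (not_lt.mpr hlc.le)
    · -- c < a : find least n with c + 2*(n+1) pointing right
      have hP : ∃ n : ℕ, c + 2 * ((n : ℤ) + 1) < m (c + 2 * ((n : ℤ) + 1)) := by
        obtain ⟨k, hk⟩ := ha.sub hc
        refine ⟨k.toNat - 1, ?_⟩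
        have hk1 : (1 : ℤ) ≤ k := by omega
        have : c + 2 * ((↑(k.toNat - 1) : ℤ) + 1) = a := by omega
        rw [this]; exact hra
      let n₀ := Nat.find hP
      set t : ℤ := c + 2 * ((n₀ : ℤ) + 1) with ht_def
      have ht : t < m t := Nat.find_spec hP
      have htEven : Even t := hc.add ⟨(n₀ : ℤ) + 1, by ring⟩
      -- t - 2 points left
      have htl : m (t - 2) < t - 2 := by
        rcases Nat.eq_zero_or_pos n₀ with h0 | hpos
        · have : t - 2 = c := by rw [ht_def, h0]; push_cast; ring
          rw [this]; exact hlc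
        · have hmin := Nat.find_min hP (m := n₀ - 1) (by omega)
          have heq : c + 2 * ((↑(n₀ - 1) : ℤ) + 1) = t - 2 := by
            rw [ht_def]; omega
          rw [heq] at hmin
          push_neg at hmin
          exact lt_of_le_of_ne hmin (hne _)
      -- every even e ≤ t - 2 points left
      have hleft : ∀ e : ℤ, Even e → e ≤ t - 2 → m e < e := by
        intro e he hle
        by_contra hcon
        push_neg at hcon
        have her : e < m e := lt_of_le_of_ne hcon (Ne.symm (hne _))
        obtain ⟨k, hk⟩ := (htEven.sub he).sub (even_two)
        have := hchainR e he her k.toNat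
        have heq2 : e + 2 * ((k.toNat : ℤ)) = t - 2 := by omega
        rw [heq2] at this
        exact absurd this (not_lt.mpr htl.le)
      -- every even e ≥ t points right
      have hright : ∀ e : ℤ, Even e → t ≤ e → e < m e := by
        intro e he hle
        obtain ⟨k, hk⟩ := he.sub htEven
        have := hchainR t htEven ht k.toNat
        have heq2 : t + 2 * ((k.toNat : ℤ)) = e := by omega
        rw [heq2] at this
        exact this
      -- the odd vertex t - 1 has nowhere to match
      set e := m (t - 1) with he_def
      have hme : m e = t - 1 := hinv (t - 1)
      have heEven : Even e := by
        have h1 := hOdd (t - 1)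
        rw [← he_def] at h1
        rw [Int.even_iff]
        rw [Int.odd_iff] at h1
        obtain ⟨u, hu⟩ := htEven
        omega
      rcases le_or_gt e (t - 2) with hle | hgt
      · have := hleft e heEven hle
        omega
      · have het : t ≤ e := by
          obtain ⟨u, hu⟩ := heEven
          obtain ⟨v, hv⟩ := htEven
          omega
        have := hright e heEven het
        omega
  -- conclusion
  intro a c ha hc
  rcases lt_or_ge a (m a) with hra | hra'
  · rcases lt_or_ge c (m c) with hrc | hrc'
    · rw [hr a, hr c, if_pos hra, if_pos hrc]
      rcases le_total a c with h | h
      · exact Or.inr (Set.Ici_subset_Ici.mpr h)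
      · exact Or.inl (Set.Ici_subset_Ici.mpr h)
    · exact absurd (key a c ha hc hra (lt_of_le_of_ne hrc' (hne _))) (by simp)
  · rcases lt_or_ge c (m c) with hrc | hrc'
    · exact absurd (key c a hc ha hrc (lt_of_le_of_ne hra' (hne _))) (by simp)
    · rw [hr a, hr c, if_neg (not_lt.mpr hra'), if_neg (not_lt.mpr hrc')]
      rcases le_total a c with h | h
      · exact Or.inl (Set.Iic_subset_Iic.mpr h)
      · exact Or.inr (Set.Iic_subset_Iic.mpr h)
end

section
/- Let H be a bi-infinite path with bipartition A ∪ B and M a perfect matching of H^K such that for all a, c ∈ A one of r(a), r(c) contains the other. Then the map sending each a ∈ A to the unique H-neighbor of a lying on r(a) is a perfect matching of H. -/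
/-- On the bi-infinite path ℤ, if M is a perfect matching of H^K such
that for all even a, c one of r(a), r(c) contains the other, then matching each even
vertex a to its neighbour in the direction of r(a) is a perfect matching of H:
each pair is an edge and every odd vertex is matched exactly once. -/
theorem stmt12 (K : ℕ) (hK : Odd K)
    (m : ℤ → ℤ) (hinv : Function.Involutive m)
    (hmatch : ∀ x, Odd (x - m x).natAbs ∧ (x - m x).natAbs ≤ K)
    (r : ℤ → Set ℤ) (hr : ∀ x, r x = if x < m x then Set.Ici x else Set.Iic x)
    (hcont : ∀ a c, Even a → Even c → r a ⊆ r c ∨ r c ⊆ r a)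
    (f : ℤ → ℤ) (hf : ∀ a, f a = if a < m a then a + 1 else a - 1) :
    (∀ a, Even a → (a - f a).natAbs = 1) ∧
    (∀ b, Odd b → ∃! a, Even a ∧ f a = b) := by
  have hne : ∀ x, m x ≠ x := by
    intro x h
    have h1 := (hmatch x).1
    rw [h] at h1
    simp at h1
  refine ⟨fun a _ => by rw [hf a]; split <;> omega, ?_⟩
  intro b hb
  obtain ⟨k, hk⟩ := hb
  have he1 : Even (b - 1) := ⟨k, by omega⟩
  have he2 : Even (b + 1) := ⟨k + 1, by omega⟩
  have key := hcont (b - 1) (b + 1) he1 he2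
  rw [hr (b - 1), hr (b + 1)] at key
  have h1 := hne (b - 1)
  have h2 := hne (b + 1)
  by_cases c1 : b - 1 < m (b - 1)
  · by_cases c2 : b + 1 < m (b + 1)
    · refine ⟨b - 1, ⟨he1, by rw [hf, if_pos c1]; ring⟩, ?_⟩
      rintro a ⟨ha, hfa⟩
      rw [hf] at hfa
      split at hfa
      · omega
      · have : a = b + 1 := by omega
        subst this
        omega
    · exfalso
      rw [if_pos c1, if_neg c2] at key
      rcases key with key | key
      · have := key (Set.mem_Ici.mpr (show b - 1 ≤ b + 2 by omega))
        rw [Set.mem_Iic] at this; omega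
      · have := key (Set.mem_Iic.mpr (show b - 2 ≤ b + 1 by omega))
        rw [Set.mem_Ici] at this; omega
  · by_cases c2 : b + 1 < m (b + 1)
    · exfalso
      rw [if_neg c1, if_pos c2] at key
      rcases key with key | key
      · have := key (Set.mem_Iic.mpr (show b - 1 ≤ b - 1 by omega))
        rw [Set.mem_Ici] at this; omega
      · have := key (Set.mem_Ici.mpr (show b + 1 ≤ b + 1 by omega))
        rw [Set.mem_Iic] at this; omega
    · refine ⟨b + 1, ⟨he2, by rw [hf, if_neg c2]; ring⟩, ?_⟩
      rintro a ⟨ha, hfa⟩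
      rw [hf] at hfa
      split at hfa
      · have : a = b - 1 := by omega
        subst this
        omega
      · omega
end
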